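/- For n ≥ 2 and 1 ≤ k ≤ n, the number of binary strings b_1...b_n of length n avoiding consecutive 1s and with b_k = 1 equals f_k * f_{n-k+1}. -/

import Mathlib

open Finset

def noConsec (n : ℕ) (b : Fin n → Bool) : Prop :=
  ∀ i j : Fin n, (j : ℕ) = (i : ℕ) + 1 → ¬(b i = true ∧ b j = true)

instance (n : ℕ) : DecidablePred (noConsec n) := fun _ => by
  unfold noConsec; infer_instance

def lastA (m : ℕ) : Finset (Fin m → Bool) :=
  univ.filter (fun b => noConsec m b ∧ ∀ i : Fin m, (i : ℕ) = m - 1 → b i = false)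

def firstA (m : ℕ) : Finset (Fin m → Bool) :=
  univ.filter (fun b => noConsec m b ∧ ∀ i : Fin m, (i : ℕ) = 0 → b i = false)

lemma lastA_step (m : ℕ) :
    (lastA (m + 2)).card = (lastA (m + 1)).card + (lastA m).card := by
  classical
  rw [← Finset.card_filter_add_card_filter_not
    (s := lastA (m + 2)) (p := fun b => b ⟨m, by omega⟩ = false)]
  congr 1
  · -- b_m = false case ≃ lastA (m+1)
    apply Finset.card_nbij'
      (i := fun b (i : Fin (m + 1)) => b ⟨i, by omega⟩)
      (j := fun x (i : Fin (m + 2)) => if h : (i : ℕ) < m + 1 then x ⟨i, h⟩ else false)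
    · intro b hb
      simp only [lastA, Finset.mem_coe, Finset.mem_filter, Finset.mem_univ, true_and] at hb ⊢
      obtain ⟨⟨hnc, _⟩, hm⟩ := hb
      refine ⟨?_, ?_⟩
      · intro i j hij hcon
        exact hnc ⟨i, by omega⟩ ⟨j, by omega⟩ (by simpa using hij) hcon
      · intro i hi
        have hieq : (⟨(i : ℕ), by omega⟩ : Fin (m + 2)) = ⟨m, by omega⟩ := by
          apply Fin.ext; simpa using (by omega : (i : ℕ) = m)
        rw [hieq]; exact hm
    · intro x hx
      simp only [lastA, Finset.mem_coe, Finset.mem_filter, Finset.mem_univ, true_and] at hx ⊢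
      obtain ⟨hnc, hlast⟩ := hx
      refine ⟨⟨?_, ?_⟩, ?_⟩
      · intro i j hij hcon
        obtain ⟨h1, h2⟩ := hcon
        dsimp only at h1 h2
        split at h2
        · next hj =>
          split at h1
          · next hi => exact hnc ⟨i, hi⟩ ⟨j, hj⟩ (by simpa using hij) ⟨h1, h2⟩
          · simp at h1
        · simp at h2
      · intro i hi
        have hi' : ¬ ((i : ℕ) < m + 1) := by omega
        simp [hi']
      · have hlt : (m : ℕ) < m + 1 := by omega
        simp only [dif_pos hlt]
        exact hlast ⟨m, hlt⟩ (by simp)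
    · intro b hb
      simp only [lastA, Finset.mem_coe, Finset.mem_filter, Finset.mem_univ, true_and] at hb
      funext i
      by_cases h : (i : ℕ) < m + 1
      · simp [h]
      · simp only [dif_neg h]
        exact (hb.1.2 i (by omega)).symm
    · intro x hx
      funext i
      simp [i.isLt]
  · -- b_m = true case ≃ lastA m
    apply Finset.card_nbij'
      (i := fun b (i : Fin m) => b ⟨i, by omega⟩)
      (j := fun x (i : Fin (m + 2)) =>
        if h : (i : ℕ) < m then x ⟨i, h⟩ else if (i : ℕ) = m then true else false)
    · intro b hb
      simp only [lastA, Finset.mem_coe, Finset.mem_filter, Finset.mem_univ, true_and,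
        Bool.not_eq_false] at hb ⊢
      obtain ⟨⟨hnc, _⟩, hm⟩ := hb
      refine ⟨?_, ?_⟩
      · intro i j hij hcon
        exact hnc ⟨i, by omega⟩ ⟨j, by omega⟩ (by simpa using hij) hcon
      · intro i hi
        by_contra hcontra
        have hb' : b ⟨(i : ℕ), by omega⟩ = true := by
          simpa using hcontra
        exact hnc ⟨(i : ℕ), by omega⟩ ⟨m, by omega⟩ (by simp; omega) ⟨hb', hm⟩
    · intro x hx
      simp only [lastA, Finset.mem_coe, Finset.mem_filter, Finset.mem_univ, true_and,
        Bool.not_eq_false] at hx ⊢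
      obtain ⟨hnc, hlast⟩ := hx
      refine ⟨⟨?_, ?_⟩, ?_⟩
      · intro i j hij hcon
        obtain ⟨h1, h2⟩ := hcon
        dsimp only at h1 h2
        split at h1
        · next hi =>
          split at h2
          · next hj => exact hnc ⟨i, hi⟩ ⟨j, hj⟩ (by simpa using hij) ⟨h1, h2⟩
          · next hj =>
            split at h2
            · next hjm =>
              have hxl := hlast ⟨(i : ℕ), hi⟩ (by simp; omega)
              rw [hxl] at h1
              simp at h1
            · simp at h2
        · next hi =>
          split at h1
          · next him =>
            split at h2
            · next hj => omega
            · next hj =>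
              split at h2
              · next hjm => omega
              · simp at h2
          · simp at h1
      · intro i hi
        have h1 : ¬ ((i : ℕ) < m) := by omega
        have h2 : ¬ ((i : ℕ) = m) := by omega
        simp [h1, h2]
      · simp
    · intro b hb
      simp only [lastA, Finset.mem_coe, Finset.mem_filter, Finset.mem_univ, true_and,
        Bool.not_eq_false] at hb
      obtain ⟨⟨hnc, hlast⟩, hm⟩ := hb
      funext i
      by_cases h : (i : ℕ) < m
      · simp [h]
      · by_cases h2 : (i : ℕ) = m
        · simp only [dif_neg h, if_pos h2]
          rw [show i = ⟨m, by omega⟩ from Fin.ext h2]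
          exact hm.symm
        · simp only [dif_neg h, if_neg h2]
          exact (hlast i (by omega)).symm
    · intro x hx
      funext i
      simp [i.isLt]

lemma lastA_card (m : ℕ) : (lastA m).card = Nat.fib (m + 1) := by
  induction m using Nat.twoStepInduction with
  | zero => decide
  | one => decide
  | more m ih1 ih2 =>
    rw [lastA_step, ih1, ih2]
    have h := Nat.fib_add_two (n := m + 1)
    simp only [show m + 1 + 2 = m + 2 + 1 from rfl] at h
    omega

lemma firstA_card (m : ℕ) : (firstA m).card = Nat.fib (m + 1) := by
  rw [← lastA_card]
  apply Finset.card_nbij'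
    (i := fun b (i : Fin m) => b ⟨m - 1 - i, by omega⟩)
    (j := fun b (i : Fin m) => b ⟨m - 1 - i, by omega⟩)
  · intro b hb
    simp only [firstA, lastA, Finset.mem_coe, Finset.mem_filter, Finset.mem_univ, true_and] at hb ⊢
    obtain ⟨hnc, hfirst⟩ := hb
    refine ⟨?_, ?_⟩
    · intro i j hij hcon
      obtain ⟨h1, h2⟩ := hcon
      exact hnc ⟨m - 1 - j, by omega⟩ ⟨m - 1 - i, by omega⟩ (by simp; omega) ⟨h2, h1⟩
    · intro i hi
      exact hfirst ⟨m - 1 - i, by omega⟩ (by simp; omega)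
  · intro b hb
    simp only [firstA, lastA, Finset.mem_coe, Finset.mem_filter, Finset.mem_univ, true_and] at hb ⊢
    obtain ⟨hnc, hlast⟩ := hb
    refine ⟨?_, ?_⟩
    · intro i j hij hcon
      obtain ⟨h1, h2⟩ := hcon
      exact hnc ⟨m - 1 - j, by omega⟩ ⟨m - 1 - i, by omega⟩ (by simp; omega) ⟨h2, h1⟩
    · intro i hi
      exact hlast ⟨m - 1 - i, by omega⟩ (by simp; omega)
  · intro b _
    funext i
    dsimp only
    congr 1
    apply Fin.ext
    simp
    omega
  · intro b _
    funext i
    dsimp only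
    congr 1
    apply Fin.ext
    simp
    omega

theorem count_noConsec_one_at (n k : ℕ) (hn : 2 ≤ n) (hk1 : 1 ≤ k) (hk2 : k ≤ n) :
    ((univ : Finset (Fin n → Bool)).filter
        (fun b => noConsec n b ∧ b ⟨k - 1, by omega⟩ = true)).card =
      Nat.fib k * Nat.fib (n - k + 1) := by
  classical
  have hcard : ((univ : Finset (Fin n → Bool)).filter
      (fun b => noConsec n b ∧ b ⟨k - 1, by omega⟩ = true)).card
      = ((lastA (k - 1)) ×ˢ (firstA (n - k))).card := by
    apply Finset.card_nbij'
      (i := fun b => (fun i : Fin (k - 1) => b ⟨i, by omega⟩,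
                      fun j : Fin (n - k) => b ⟨(j : ℕ) + k, by omega⟩))
      (j := fun p (i : Fin n) =>
        if h : (i : ℕ) < k - 1 then p.1 ⟨i, h⟩
        else if h2 : (i : ℕ) = k - 1 then true
        else p.2 ⟨(i : ℕ) - k, by omega⟩)
    · intro b hb
      simp only [Finset.mem_coe, Finset.mem_filter, Finset.mem_univ, true_and, Finset.mem_product,
        lastA, firstA] at hb ⊢
      obtain ⟨hnc, hk⟩ := hb
      refine ⟨⟨?_, ?_⟩, ?_, ?_⟩
      · intro i j hij hcon
        exact hnc ⟨i, by omega⟩ ⟨j, by omega⟩ (by simpa using hij) hcon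
      · intro i hi
        by_contra hcontra
        have hb' : b ⟨(i : ℕ), by omega⟩ = true := by simpa using hcontra
        exact hnc ⟨(i : ℕ), by omega⟩ ⟨k - 1, by omega⟩ (by simp; omega) ⟨hb', hk⟩
      · intro i j hij hcon
        exact hnc ⟨(i : ℕ) + k, by omega⟩ ⟨(j : ℕ) + k, by omega⟩ (by simp; omega) hcon
      · intro j hj
        by_contra hcontra
        have hb' : b ⟨(j : ℕ) + k, by omega⟩ = true := by simpa using hcontra
        exact hnc ⟨k - 1, by omega⟩ ⟨(j : ℕ) + k, by omega⟩ (by simp; omega) ⟨hk, hb'⟩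
    · intro p hp
      simp only [Finset.mem_coe, Finset.mem_filter, Finset.mem_univ, true_and, Finset.mem_product,
        lastA, firstA] at hp ⊢
      obtain ⟨⟨hnc1, hlast1⟩, hnc2, hfirst2⟩ := hp
      refine ⟨?_, ?_⟩
      · intro i j hij hcon
        obtain ⟨h1, h2⟩ := hcon
        dsimp only at h1 h2
        split at h1
        · next hi =>
          split at h2
          · next hj => exact hnc1 ⟨i, hi⟩ ⟨j, hj⟩ (by simpa using hij) ⟨h1, h2⟩
          · next hj =>
            -- j = k - 1, i = k - 2
            have hxl := hlast1 ⟨(i : ℕ), hi⟩ (by simp; omega)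
            rw [hxl] at h1
            simp at h1
        · next hi =>
          split at h1
          · next hik =>
            -- i = k - 1, j = k
            split at h2
            · next hj => omega
            · next hj =>
              split at h2
              · next hjk => omega
              · next hjk =>
                have hxf := hfirst2 ⟨(j : ℕ) - k, by omega⟩ (by simp; omega)
                rw [hxf] at h2
                simp at h2
          · next hik =>
            -- i ≥ k
            split at h2
            · next hj => omega
            · next hj =>
              split at h2
              · next hjk => omega
              · next hjk =>
                exact hnc2 ⟨(i : ℕ) - k, by omega⟩ ⟨(j : ℕ) - k, by omega⟩
                  (by simp; omega) ⟨h1, h2⟩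
      · have h1 : ¬ ((k - 1 : ℕ) < k - 1) := by omega
        simp [h1]
    · intro b hb
      simp only [Finset.mem_coe, Finset.mem_filter, Finset.mem_univ, true_and] at hb
      obtain ⟨hnc, hk⟩ := hb
      funext i
      by_cases h : (i : ℕ) < k - 1
      · simp [h]
      · by_cases h2 : (i : ℕ) = k - 1
        · simp only [dif_neg h, dif_pos h2]
          rw [show i = ⟨k - 1, by omega⟩ from Fin.ext h2]
          exact hk.symm
        · simp only [dif_neg h, dif_neg h2]
          congr 1
          apply Fin.ext
          simp
          omega
    · intro p hp
      obtain ⟨p1, p2⟩ := p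
      simp only [Prod.mk.injEq]
      constructor
      · funext i
        have h : (i : ℕ) < k - 1 := i.isLt
        simp [h]
      · funext j
        have h : ¬ ((j : ℕ) + k < k - 1) := by omega
        have h2 : ¬ ((j : ℕ) + k = k - 1) := by omega
        simp only [dif_neg h, dif_neg h2]
        congr 1
        apply Fin.ext
        simp
  rw [hcard, Finset.card_product, lastA_card, firstA_card, Nat.sub_add_cancel hk1]
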